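/- arXiv:2211.07267 — 4 statements merged into one kernel-verified Lean document; each statement's English description precedes it below -/
import Mathlib

section
/- Suppose the joint pmf of variables (X_v)_{v ∈ V} factorizes according to a tree T = (V, E) as p(x) = ∏_{v ∈ V} p_v(x_v) · ∏_{(u,v) ∈ E} p_{uv}(x_u,x_v)/(p_u(x_u) p_v(x_v)). Then ∑_x p(x) log p(x) = ∑_{v ∈ V} ∑_{x_v} p_v(x_v) log p_v(x_v) + ∑_{(u,v) ∈ E} I(X_u; X_v); i.e., the expected log-likelihood equals the sum of the negative marginal entropies plus the sum of edgewise mutual informations. -/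
/-!
Taking logarithms in the factorization, `log p(x)` splits into a sum of terms each depending on
a single coordinate `x_v` or a single pair `(x_u, x_v)`. The expectation under `p` of such a term
is its expectation under the corresponding marginal, which gives the marginal entropies and the
edgewise mutual informations.
-/

open Finset Real Classical

theorem sum_mul_comp_eq_sum_marginal {α γ R : Type*} [Fintype α] [Fintype γ]
    [NonUnitalNonAssocSemiring R] (p : α → R) (g : α → γ) (f : γ → R) :
    ∑ x, p x * f (g x) = ∑ y, (∑ x, if g x = y then p x else 0) * f y := by
  simp_rw [sum_mul, ite_mul, zero_mul]
  rw [sum_comm]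
  simp

theorem sum_mul_apply_apply_eq_sum_marginal {V : Type*} [Fintype V] [DecidableEq V]
    {β : V → Type*} [∀ v, Fintype (β v)] {R : Type*} [NonUnitalNonAssocSemiring R]
    (p : (∀ v, β v) → R) (u v : V) (f : β u → β v → R) :
    ∑ x, p x * f (x u) (x v)
      = ∑ a, ∑ b, (∑ x, if x u = a ∧ x v = b then p x else 0) * f a b := by
  rw [sum_mul_comp_eq_sum_marginal p (fun x => (x u, x v)) (fun y => f y.1 y.2),
    Fintype.sum_prod_type]
  simp only [Prod.mk.injEq]

/-- No positivity is needed: when the product vanishes both sides are `0`. -/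
theorem Real.mul_log_prod_mul_prod {ι κ : Type*} (s : Finset ι) (t : Finset κ)
    (f : ι → ℝ) (g : κ → ℝ) :
    ((∏ i ∈ s, f i) * ∏ j ∈ t, g j) * log ((∏ i ∈ s, f i) * ∏ j ∈ t, g j)
      = ((∏ i ∈ s, f i) * ∏ j ∈ t, g j)
          * (∑ i ∈ s, log (f i) + ∑ j ∈ t, log (g j)) := by
  rcases eq_or_ne ((∏ i ∈ s, f i) * ∏ j ∈ t, g j) 0 with h | h
  · simp [h]
  obtain ⟨hf, hg⟩ := mul_ne_zero_iff.mp h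
  rw [log_mul hf hg, log_prod (prod_ne_zero_iff.mp hf), log_prod (prod_ne_zero_iff.mp hg)]

theorem tree_factorization_expected_loglik_general
    {V : Type*} [Fintype V] [DecidableEq V] {β : V → Type*} [∀ v, Fintype (β v)]
    (p : (∀ v, β v) → ℝ)
    (pv : ∀ v, β v → ℝ)
    (hpv : ∀ v (y : β v), pv v y = ∑ x, if x v = y then p x else 0)
    (puv : ∀ u v : V, β u → β v → ℝ)
    (hpuv : ∀ u v (a : β u) (b : β v),
      puv u v a b = ∑ x, if x u = a ∧ x v = b then p x else 0)
    (E : Finset (V × V))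
    (hfact : ∀ x, p x = (∏ v, pv v (x v)) *
      ∏ e ∈ E, puv e.1 e.2 (x e.1) (x e.2) / (pv e.1 (x e.1) * pv e.2 (x e.2))) :
    ∑ x, p x * Real.log (p x)
      = (∑ v, ∑ y : β v, pv v y * Real.log (pv v y))
        + ∑ e ∈ E, ∑ a : β e.1, ∑ b : β e.2,
            puv e.1 e.2 a b * Real.log (puv e.1 e.2 a b / (pv e.1 a * pv e.2 b)) := by
  have hlog : ∀ x, p x * log (p x) = p x * (∑ v, log (pv v (x v)) + ∑ e ∈ E,
      log (puv e.1 e.2 (x e.1) (x e.2) / (pv e.1 (x e.1) * pv e.2 (x e.2)))) := fun x => by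
    rw [hfact x]
    exact mul_log_prod_mul_prod _ _ _ _
  calc ∑ x, p x * log (p x)
      = ∑ x, ((∑ v, p x * log (pv v (x v))) + ∑ e ∈ E,
          p x * log (puv e.1 e.2 (x e.1) (x e.2) / (pv e.1 (x e.1) * pv e.2 (x e.2)))) := by
        simp_rw [hlog, mul_add, mul_sum]
    _ = (∑ v, ∑ x, p x * log (pv v (x v))) + ∑ e ∈ E,
          ∑ x, p x * log (puv e.1 e.2 (x e.1) (x e.2) / (pv e.1 (x e.1) * pv e.2 (x e.2))) := by
        rw [sum_add_distrib, sum_comm, sum_comm (s := univ) (t := E)]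
    _ = _ := by
        congr 1
        · refine sum_congr rfl fun v _ => ?_
          rw [sum_mul_comp_eq_sum_marginal p (fun x => x v) (fun y => log (pv v y))]
          simp_rw [← hpv]
        · refine sum_congr rfl fun e _ => ?_
          rw [sum_mul_apply_apply_eq_sum_marginal p e.1 e.2
            (fun a b => log (puv e.1 e.2 a b / (pv e.1 a * pv e.2 b)))]
          simp_rw [← hpuv]

theorem tree_factorization_expected_loglik
    {V : Type*} [Fintype V] [DecidableEq V] {β : V → Type*} [∀ v, Fintype (β v)]
    (p : (∀ v, β v) → ℝ)
    (hpos : ∀ x, 0 < p x) (hsum : ∑ x, p x = 1)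
    (pv : ∀ v, β v → ℝ)
    (hpv : ∀ v (y : β v), pv v y = ∑ x, if x v = y then p x else 0)
    (puv : ∀ u v : V, β u → β v → ℝ)
    (hpuv : ∀ u v (a : β u) (b : β v),
      puv u v a b = ∑ x, if x u = a ∧ x v = b then p x else 0)
    (hpvpos : ∀ v (y : β v), 0 < pv v y)
    (E : Finset (V × V))
    (hirr : ∀ e ∈ E, e.1 ≠ e.2)
    (hanti : ∀ u v : V, (u, v) ∈ E → (v, u) ∉ E)
    (htree : (SimpleGraph.fromRel (fun u v => (u, v) ∈ E)).IsTree)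
    (hfact : ∀ x, p x = (∏ v, pv v (x v)) *
      ∏ e ∈ E, puv e.1 e.2 (x e.1) (x e.2) / (pv e.1 (x e.1) * pv e.2 (x e.2))) :
    ∑ x, p x * Real.log (p x)
      = (∑ v, ∑ y : β v, pv v y * Real.log (pv v y))
        + ∑ e ∈ E, ∑ a : β e.1, ∑ b : β e.2,
            puv e.1 e.2 a b * Real.log (puv e.1 e.2 a b / (pv e.1 a * pv e.2 b)) :=
  tree_factorization_expected_loglik_general p pv hpv puv hpuv E hfact
end

section
/- Among all probability distributions factorizing according to spanning trees of a complete graph on a finite vertex set, the expected log-likelihood of a tree-factorized approximation is maximized by the spanning tree maximizing the total edge weight ∑_{(u,v)∈E} I(X_u;X_v); i.e., for two trees T₁, T₂, if ∑_{e∈E(T₁)} I_e ≥ ∑_{e∈E(T₂)} I_e then the T₁-factorized approximation has expected log-likelihood at least that of T₂. -/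
open Finset Real Classical

/-! Taking logarithms, the tree approximation splits into the node term `∑ᵥ log p_v(x_v)`, which
does not depend on the tree, plus one pointwise mutual information term per edge. The expectation
of each edge term under `p` only sees the pair marginal of its endpoints, so it is `I_e`. Hence the
expected log-likelihood of `p_T` is a constant plus the weight `∑_{e ∈ E(T)} I_e`. -/

theorem Finset.sum_ite_pos_of_pos {α : Type*} [Fintype α] {f : α → ℝ} (hf : ∀ x, 0 < f x)
    {P : α → Prop} [DecidablePred P] {x₀ : α} (hx₀ : P x₀) :
    0 < ∑ x, if P x then f x else 0 :=
  sum_pos' (fun x _ => by split_ifs <;> simp [(hf x).le]) ⟨x₀, mem_univ x₀, by simp [hx₀, hf x₀]⟩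

theorem Finset.sum_mul_comp_eq_sum_sum {α γ δ : Type*} [Fintype α] [Fintype γ] [Fintype δ]
    (p : α → ℝ) (f : α → γ) (g : α → δ) (φ : γ → δ → ℝ) :
    ∑ x, p x * φ (f x) (g x) = ∑ a, ∑ b, (∑ x, if f x = a ∧ g x = b then p x else 0) * φ a b := by
  have hfiber : ∀ x, p x * φ (f x) (g x) =
      ∑ a, ∑ b, if f x = a ∧ g x = b then p x * φ a b else 0 := by
    intro x
    simp [ite_and, sum_ite_eq]
  simp_rw [hfiber, sum_mul, ite_mul, zero_mul]
  rw [sum_comm]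
  exact sum_congr rfl fun a _ => sum_comm

theorem Real.log_mul_prod {ι : Type*} (s : Finset ι) {a : ℝ} (r : ι → ℝ) (ha : a ≠ 0)
    (hr : ∀ i ∈ s, r i ≠ 0) :
    log (a * ∏ i ∈ s, r i) = log a + ∑ i ∈ s, log (r i) := by
  rw [log_mul ha (prod_ne_zero_iff.mpr hr), log_prod hr]

section TreeApproximation

variable {V : Type*} [Fintype V] [DecidableEq V] {β : V → Type*} [∀ v, Fintype (β v)]
  {p : (∀ v, β v) → ℝ} {pv : ∀ v, β v → ℝ} {puv : ∀ u v : V, β u → β v → ℝ}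

theorem pairMarginal_pos (hpos : ∀ x, 0 < p x)
    (hpuv : ∀ u v (a : β u) (b : β v), puv u v a b = ∑ x, if x u = a ∧ x v = b then p x else 0)
    (u v : V) (x : ∀ v, β v) : 0 < puv u v (x u) (x v) := by
  rw [hpuv]
  exact sum_ite_pos_of_pos hpos ⟨rfl, rfl⟩

theorem expected_pointwiseMutualInfo_eq
    (hpuv : ∀ u v (a : β u) (b : β v), puv u v a b = ∑ x, if x u = a ∧ x v = b then p x else 0)
    (u v : V) :
    ∑ x, p x * log (puv u v (x u) (x v) / (pv u (x u) * pv v (x v))) =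
      ∑ a : β u, ∑ b : β v, puv u v a b * log (puv u v a b / (pv u a * pv v b)) := by
  rw [sum_mul_comp_eq_sum_sum p (fun x => x u) (fun x => x v)
    (fun a b => log (puv u v a b / (pv u a * pv v b)))]
  simp_rw [← hpuv]

theorem expected_log_treeApprox_eq (hpos : ∀ x, 0 < p x)
    (hpuv : ∀ u v (a : β u) (b : β v), puv u v a b = ∑ x, if x u = a ∧ x v = b then p x else 0)
    (hpvpos : ∀ v (y : β v), 0 < pv v y) (E : Finset (V × V)) :
    ∑ x, p x * log ((∏ v, pv v (x v)) *
        ∏ e ∈ E, puv e.1 e.2 (x e.1) (x e.2) / (pv e.1 (x e.1) * pv e.2 (x e.2))) =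
      ∑ x, p x * log (∏ v, pv v (x v)) + ∑ e ∈ E, ∑ a : β e.1, ∑ b : β e.2,
        puv e.1 e.2 a b * log (puv e.1 e.2 a b / (pv e.1 a * pv e.2 b)) := by
  have hlog : ∀ x : ∀ v, β v, log ((∏ v, pv v (x v)) *
        ∏ e ∈ E, puv e.1 e.2 (x e.1) (x e.2) / (pv e.1 (x e.1) * pv e.2 (x e.2))) =
      log (∏ v, pv v (x v)) +
        ∑ e ∈ E, log (puv e.1 e.2 (x e.1) (x e.2) / (pv e.1 (x e.1) * pv e.2 (x e.2))) :=
    fun x => log_mul_prod E _ (prod_pos fun v _ => hpvpos v (x v)).ne' fun e _ =>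
      (div_pos (pairMarginal_pos hpos hpuv e.1 e.2 x)
        (mul_pos (hpvpos e.1 (x e.1)) (hpvpos e.2 (x e.2)))).ne'
  simp_rw [hlog, mul_add, sum_add_distrib, mul_sum]
  rw [sum_comm]
  congr 1
  exact sum_congr rfl fun e _ => expected_pointwiseMutualInfo_eq hpuv e.1 e.2

end TreeApproximation

theorem chow_liu_max_weight_tree_maximizes_expected_loglik_general
    {V : Type*} [Fintype V] [DecidableEq V] {β : V → Type*} [∀ v, Fintype (β v)]
    (p : (∀ v, β v) → ℝ)
    (hpos : ∀ x, 0 < p x)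
    (pv : ∀ v, β v → ℝ)
    (puv : ∀ u v : V, β u → β v → ℝ)
    (hpuv : ∀ u v (a : β u) (b : β v),
      puv u v a b = ∑ x, if x u = a ∧ x v = b then p x else 0)
    (hpvpos : ∀ v (y : β v), 0 < pv v y)
    -- the tree approximation to `p` determined by an edge set `E`
    (pT : Finset (V × V) → (∀ v, β v) → ℝ)
    (hpT : ∀ (E : Finset (V × V)) x, pT E x = (∏ v, pv v (x v)) *
      ∏ e ∈ E, puv e.1 e.2 (x e.1) (x e.2) / (pv e.1 (x e.1) * pv e.2 (x e.2)))
    -- the edgewise mutual information computed from the true marginals of `p`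
    (I : V × V → ℝ)
    (hI : ∀ e : V × V, I e = ∑ a : β e.1, ∑ b : β e.2,
      puv e.1 e.2 a b * Real.log (puv e.1 e.2 a b / (pv e.1 a * pv e.2 b)))
    -- two spanning trees, each given by an edge set
    (E₁ E₂ : Finset (V × V))
    (hweight : ∑ e ∈ E₂, I e ≤ ∑ e ∈ E₁, I e) :
    ∑ x, p x * Real.log (pT E₂ x) ≤ ∑ x, p x * Real.log (pT E₁ x) := by
  have hdecomp : ∀ E, ∑ x, p x * log (pT E x) =
      ∑ x, p x * log (∏ v, pv v (x v)) + ∑ e ∈ E, I e := fun E => by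
    simp_rw [hpT, hI]
    exact expected_log_treeApprox_eq hpos hpuv hpvpos E
  rw [hdecomp E₁, hdecomp E₂]
  gcongr

theorem chow_liu_max_weight_tree_maximizes_expected_loglik
    {V : Type*} [Fintype V] [DecidableEq V] {β : V → Type*} [∀ v, Fintype (β v)]
    (p : (∀ v, β v) → ℝ)
    (hpos : ∀ x, 0 < p x) (hsum : ∑ x, p x = 1)
    (pv : ∀ v, β v → ℝ)
    (hpv : ∀ v (y : β v), pv v y = ∑ x, if x v = y then p x else 0)
    (puv : ∀ u v : V, β u → β v → ℝ)
    (hpuv : ∀ u v (a : β u) (b : β v),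
      puv u v a b = ∑ x, if x u = a ∧ x v = b then p x else 0)
    (hpvpos : ∀ v (y : β v), 0 < pv v y)
    -- the tree approximation to `p` determined by an edge set `E`
    (pT : Finset (V × V) → (∀ v, β v) → ℝ)
    (hpT : ∀ (E : Finset (V × V)) x, pT E x = (∏ v, pv v (x v)) *
      ∏ e ∈ E, puv e.1 e.2 (x e.1) (x e.2) / (pv e.1 (x e.1) * pv e.2 (x e.2)))
    -- the edgewise mutual information computed from the true marginals of `p`
    (I : V × V → ℝ)
    (hI : ∀ e : V × V, I e = ∑ a : β e.1, ∑ b : β e.2,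
      puv e.1 e.2 a b * Real.log (puv e.1 e.2 a b / (pv e.1 a * pv e.2 b)))
    -- two spanning trees, each given by an edge set
    (E₁ E₂ : Finset (V × V))
    (hirr₁ : ∀ e ∈ E₁, e.1 ≠ e.2) (hanti₁ : ∀ u v : V, (u, v) ∈ E₁ → (v, u) ∉ E₁)
    (htree₁ : (SimpleGraph.fromRel (fun u v => (u, v) ∈ E₁)).IsTree)
    (hirr₂ : ∀ e ∈ E₂, e.1 ≠ e.2) (hanti₂ : ∀ u v : V, (u, v) ∈ E₂ → (v, u) ∉ E₂)
    (htree₂ : (SimpleGraph.fromRel (fun u v => (u, v) ∈ E₂)).IsTree)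
    (hweight : ∑ e ∈ E₂, I e ≤ ∑ e ∈ E₁, I e) :
    ∑ x, p x * Real.log (pT E₂ x) ≤ ∑ x, p x * Real.log (pT E₁ x) :=
  chow_liu_max_weight_tree_maximizes_expected_loglik_general p hpos pv puv hpuv hpvpos pT hpT I hI
    E₁ E₂ hweight
end

section
/- For a GLM density f(y|x) = exp( (yθ − b(θ))/a(φ) + c(y,φ) ) with natural parameter θ = θ(X) random through X, the symmetric KL divergence between the joint density f(x,y) and the independence product f(x)f(y) equals Cov(θ(X), Y)/a(φ). -/
/-!
Writing `q = p_X p_Y` for the independence product, the symmetric KL divergence is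
`∑ (p - q) log (p / q)`, and `log (p / q) = log f(y|x) - log p_Y(y)` is
`θ(x) y / a(φ)` plus a function of `x` alone plus a function of `y` alone. Since `p` and `q`
have the same marginals, both of the latter integrate to zero against `p - q`, which leaves
`(E_p[θ Y] - E_q[θ Y]) / a(φ) = Cov(θ(X), Y) / a(φ)`.
-/

open Finset Real

theorem mul_log_div_add_mul_log_div (p q : ℝ) :
    p * log (p / q) + q * log (q / p) = (p - q) * log (p / q) := by
  rw [← inv_div p q, log_inv]
  ring

section Marginals

variable {α β R : Type*} [Fintype α] [Fintype β] [CommRing R]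

theorem sum_sum_sub_mul_add_add_of_marginals_eq {p q : α → β → R}
    (hrow : ∀ x, ∑ y, p x y = ∑ y, q x y) (hcol : ∀ y, ∑ x, p x y = ∑ x, q x y)
    (h : α → β → R) (f : α → R) (g : β → R) :
    ∑ x, ∑ y, (p x y - q x y) * (h x y + f x + g y)
      = ∑ x, ∑ y, (p x y - q x y) * h x y := by
  have hf : ∑ x, ∑ y, (p x y - q x y) * f x = 0 :=
    sum_eq_zero fun x _ => by rw [← sum_mul, sum_sub_distrib, hrow, sub_self, zero_mul]
  have hg : ∑ x, ∑ y, (p x y - q x y) * g y = 0 := by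
    rw [sum_comm]
    exact sum_eq_zero fun y _ => by rw [← sum_mul, sum_sub_distrib, hcol, sub_self, zero_mul]
  simp only [mul_add, sum_add_distrib, hf, hg, add_zero]

end Marginals

theorem glm_symmetric_kl_eq_cov_div_dispersion_general
    {α β : Type*} [Fintype α] [Fintype β]
    (val : β → ℝ)                      -- numeric values of the response Y
    (θ : α → ℝ) (aφ : ℝ) (b : ℝ → ℝ) (c : β → ℝ)
    (pX : α → ℝ) (hpXpos : ∀ x, 0 < pX x) (hpX1 : ∑ x, pX x = 1)
    (cond : α → β → ℝ)
    (hcond : ∀ x y, cond x y = Real.exp ((val y * θ x - b (θ x)) / aφ + c y))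
    (hcond1 : ∀ x, ∑ y, cond x y = 1)
    (p : α → β → ℝ) (hp : ∀ x y, p x y = pX x * cond x y)
    (pY : β → ℝ) (hpY : ∀ y, pY y = ∑ x, p x y)
    (q : α → β → ℝ) (hq : ∀ x y, q x y = pX x * pY y)
    (Cov : ℝ)
    (hCov : Cov = (∑ x, ∑ y, p x y * (θ x * val y))
      - (∑ x, pX x * θ x) * (∑ y, pY y * val y)) :
    (∑ x, ∑ y, p x y * Real.log (p x y / q x y))
      + (∑ x, ∑ y, q x y * Real.log (q x y / p x y)) = Cov / aφ := by
  have hα : (univ : Finset α).Nonempty := nonempty_of_sum_ne_zero (hpX1 ▸ one_ne_zero)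
  have hcond_pos (x y) : 0 < cond x y := hcond x y ▸ exp_pos _
  have hpY_pos (y) : 0 < pY y :=
    hpY y ▸ sum_pos (fun x _ => hp x y ▸ mul_pos (hpXpos x) (hcond_pos x y)) hα
  have hp_row (x) : ∑ y, p x y = pX x := by simp only [hp, ← mul_sum, hcond1, mul_one]
  have hpY1 : ∑ y, pY y = 1 := by simp only [hpY]; rw [sum_comm]; simp only [hp_row, hpX1]
  have hrow (x) : ∑ y, p x y = ∑ y, q x y := by
    simp only [hp_row, hq, ← mul_sum, hpY1, mul_one]
  have hcol (y) : ∑ x, p x y = ∑ x, q x y := by simp only [hq, ← sum_mul, hpX1, one_mul, hpY]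
  have hlog (x y) : log (p x y / q x y)
      = θ x * val y / aφ + (-b (θ x) / aφ) + (c y - log (pY y)) := by
    rw [hp, hq, mul_div_mul_left _ _ (hpXpos x).ne',
      log_div (hcond_pos x y).ne' (hpY_pos y).ne', hcond, log_exp]
    ring
  have hq_moment : ∑ x, ∑ y, q x y * (θ x * val y)
      = (∑ x, pX x * θ x) * (∑ y, pY y * val y) := by
    rw [sum_mul_sum]
    exact sum_congr rfl fun x _ => sum_congr rfl fun y _ => by rw [hq]; ring
  calc (∑ x, ∑ y, p x y * log (p x y / q x y)) + (∑ x, ∑ y, q x y * log (q x y / p x y))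
      = ∑ x, ∑ y, (p x y - q x y) * log (p x y / q x y) := by
        simp only [← sum_add_distrib, mul_log_div_add_mul_log_div]
    _ = ∑ x, ∑ y, (p x y - q x y) * (θ x * val y / aφ) := by
        simp only [hlog]; exact sum_sum_sub_mul_add_add_of_marginals_eq hrow hcol _ _ _
    _ = Cov / aφ := by
        simp only [← mul_div_assoc, sub_mul, sum_sub_distrib, ← sum_div, hq_moment, hCov]

theorem glm_symmetric_kl_eq_cov_div_dispersion
    {α β : Type*} [Fintype α] [Fintype β]
    (val : β → ℝ)                      -- numeric values of the response Y
    (θ : α → ℝ) (aφ : ℝ) (haφ : 0 < aφ) (b : ℝ → ℝ) (c : β → ℝ)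
    (pX : α → ℝ) (hpXpos : ∀ x, 0 < pX x) (hpX1 : ∑ x, pX x = 1)
    (cond : α → β → ℝ)
    (hcond : ∀ x y, cond x y = Real.exp ((val y * θ x - b (θ x)) / aφ + c y))
    (hcond1 : ∀ x, ∑ y, cond x y = 1)
    (p : α → β → ℝ) (hp : ∀ x y, p x y = pX x * cond x y)
    (pY : β → ℝ) (hpY : ∀ y, pY y = ∑ x, p x y)
    (q : α → β → ℝ) (hq : ∀ x y, q x y = pX x * pY y)
    (Cov : ℝ)
    (hCov : Cov = (∑ x, ∑ y, p x y * (θ x * val y))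
      - (∑ x, pX x * θ x) * (∑ y, pY y * val y)) :
    (∑ x, ∑ y, p x y * Real.log (p x y / q x y))
      + (∑ x, ∑ y, q x y * Real.log (q x y / p x y)) = Cov / aφ :=
  glm_symmetric_kl_eq_cov_div_dispersion_general val θ aφ b c pX hpXpos hpX1 cond hcond hcond1 p hp
    pY hpY q hq Cov hCov
end

section
/- In the GLM setting, the entropy coefficient EC = Cov(θ(X),Y)/a(φ) is nonnegative, and EC = 0 if and only if X and Y are independent. -/
/-!
Writing `q x y = pX x * pY y`, the GLM form of the conditional pmf gives
`log p - log q = θ x * val y / aφ + u x + v y`. Since `p - q` has vanishing row and column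
sums, the additive terms `u x + v y` integrate to zero against it, so
`EC = ∑ (p - q) (log p - log q)`, the symmetric KL divergence between the joint law and the
product of its marginals. Each summand is nonnegative by monotonicity of `log`, and vanishes
exactly when `p = q`.
-/

open Finset Real

section SymmKL

variable {ι : Type*} [Fintype ι]

lemma sub_mul_log_sub_log_nonneg {a b : ℝ} (ha : 0 < a) (hb : 0 < b) :
    0 ≤ (a - b) * (log a - log b) := by
  rcases le_total a b with hab | hba
  · exact mul_nonneg_of_nonpos_of_nonpos (sub_nonpos.2 hab) (sub_nonpos.2 (log_le_log ha hab))
  · exact mul_nonneg (sub_nonneg.2 hba) (sub_nonneg.2 (log_le_log hb hba))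

lemma sub_mul_log_sub_log_eq_zero_iff {a b : ℝ} (ha : 0 < a) (hb : 0 < b) :
    (a - b) * (log a - log b) = 0 ↔ a = b := by
  rw [mul_eq_zero, sub_eq_zero, sub_eq_zero, or_iff_left_of_imp fun h => log_injOn_pos ha hb h]

/-- The symmetric Kullback–Leibler divergence `KL(p‖q) + KL(q‖p)` of two pmfs. -/
noncomputable def symmKL (p q : ι → ℝ) : ℝ :=
  ∑ i, (p i - q i) * (log (p i) - log (q i))

lemma symmKL_nonneg {p q : ι → ℝ} (hp : ∀ i, 0 < p i) (hq : ∀ i, 0 < q i) :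
    0 ≤ symmKL p q :=
  sum_nonneg fun i _ => sub_mul_log_sub_log_nonneg (hp i) (hq i)

lemma symmKL_eq_zero_iff {p q : ι → ℝ} (hp : ∀ i, 0 < p i) (hq : ∀ i, 0 < q i) :
    symmKL p q = 0 ↔ p = q := by
  rw [symmKL, sum_eq_zero_iff_of_nonneg fun i _ => sub_mul_log_sub_log_nonneg (hp i) (hq i),
    funext_iff]
  simp only [mem_univ, true_implies, sub_mul_log_sub_log_eq_zero_iff (hp _) (hq _)]

end SymmKL

section Marginals

variable {α β : Type*} [Fintype α] [Fintype β]

lemma sum_sum_sub_mul_marginals_mul_add_eq_zero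
    {p : α → β → ℝ} {pX : α → ℝ} {pY : β → ℝ}
    (hpX1 : ∑ x, pX x = 1) (hpX : ∀ x, ∑ y, p x y = pX x) (hpY : ∀ y, pY y = ∑ x, p x y)
    (u : α → ℝ) (v : β → ℝ) :
    ∑ x, ∑ y, (p x y - pX x * pY y) * (u x + v y) = 0 := by
  have hpY1 : ∑ y, pY y = 1 := by simp only [hpY]; rw [sum_comm]; simp only [hpX, hpX1]
  have hrow x : ∑ y, (p x y - pX x * pY y) = 0 := by
    rw [sum_sub_distrib, hpX, ← mul_sum, hpY1, mul_one, sub_self]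
  have hcol y : ∑ x, (p x y - pX x * pY y) = 0 := by
    rw [sum_sub_distrib, ← hpY, ← sum_mul, hpX1, one_mul, sub_self]
  simp only [mul_add, sum_add_distrib]
  rw [sum_comm (f := fun x y => (p x y - pX x * pY y) * v y)]
  simp only [← sum_mul, hrow, hcol, zero_mul, sum_const_zero, add_zero]

lemma sum_sum_sub_mul_prod_mul_eq_sub (p : α → β → ℝ) (pX : α → ℝ) (pY : β → ℝ)
    (f : α → ℝ) (g : β → ℝ) :
    ∑ x, ∑ y, (p x y - pX x * pY y) * (f x * g y)
      = ∑ x, ∑ y, p x y * (f x * g y) - (∑ x, pX x * f x) * ∑ y, pY y * g y := by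
  rw [sum_mul_sum]
  simp only [sub_mul, sum_sub_distrib]
  congr 1
  exact sum_congr rfl fun x _ => sum_congr rfl fun y _ => by ring

end Marginals

theorem glm_entropy_coefficient_nonneg_iff_indep_general
    {α β : Type*} [Fintype α] [Fintype β]
    (val : β → ℝ)                      -- numeric values of the response Y
    (θ : α → ℝ) (aφ : ℝ) (b : ℝ → ℝ) (c : β → ℝ)
    (pX : α → ℝ) (hpXpos : ∀ x, 0 < pX x) (hpX1 : ∑ x, pX x = 1)
    (cond : α → β → ℝ)
    (hcond : ∀ x y, cond x y = Real.exp ((val y * θ x - b (θ x)) / aφ + c y))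
    (hcond1 : ∀ x, ∑ y, cond x y = 1)
    (p : α → β → ℝ) (hp : ∀ x y, p x y = pX x * cond x y)
    (pY : β → ℝ) (hpY : ∀ y, pY y = ∑ x, p x y)
    (Cov : ℝ)
    (hCov : Cov = (∑ x, ∑ y, p x y * (θ x * val y))
      - (∑ x, pX x * θ x) * (∑ y, pY y * val y))
    (EC : ℝ) (hEC : EC = Cov / aφ) :
    0 ≤ EC ∧ (EC = 0 ↔ ∀ x y, p x y = pX x * pY y) := by
  have hcond_pos x y : 0 < cond x y := hcond x y ▸ exp_pos _
  have hp_pos : ∀ z : α × β, 0 < p z.1 z.2 := fun z =>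
    hp z.1 z.2 ▸ mul_pos (hpXpos _) (hcond_pos _ _)
  have hpY_pos y : 0 < pY y := hpY y ▸
    sum_pos (fun x _ => hp_pos (x, y)) (nonempty_of_sum_ne_zero (hpX1 ▸ one_ne_zero))
  have hq_pos : ∀ z : α × β, 0 < pX z.1 * pY z.2 := fun z => mul_pos (hpXpos _) (hpY_pos _)
  have hpX x : ∑ y, p x y = pX x := by simp only [hp, ← mul_sum, hcond1, mul_one]
  have hlog x y : log (p x y) - log (pX x * pY y)
      = θ x * val y / aφ + (-b (θ x) / aφ + (c y - log (pY y))) := by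
    rw [hp, log_mul (hpXpos x).ne' (hcond_pos x y).ne', hcond, log_exp,
      log_mul (hpXpos x).ne' (hpY_pos y).ne']
    ring
  have hEC_symmKL : EC = symmKL (fun z : α × β => p z.1 z.2) fun z => pX z.1 * pY z.2 := by
    rw [symmKL, Fintype.sum_prod_type, hEC, hCov, ← sum_sum_sub_mul_prod_mul_eq_sub, sum_div,
      ← add_zero (∑ x, _ / aφ), ← sum_sum_sub_mul_marginals_mul_add_eq_zero hpX1 hpX hpY
        (fun x => -b (θ x) / aφ) (fun y => c y - log (pY y)), ← sum_add_distrib]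
    refine sum_congr rfl fun x _ => ?_
    rw [sum_div, ← sum_add_distrib]
    exact sum_congr rfl fun y _ => by rw [hlog]; ring
  rw [hEC_symmKL, symmKL_eq_zero_iff hp_pos hq_pos, funext_iff, Prod.forall]
  exact ⟨symmKL_nonneg hp_pos hq_pos, Iff.rfl⟩

theorem glm_entropy_coefficient_nonneg_iff_indep
    {α β : Type*} [Fintype α] [Fintype β]
    (val : β → ℝ)                      -- numeric values of the response Y
    (θ : α → ℝ) (aφ : ℝ) (haφ : 0 < aφ) (b : ℝ → ℝ) (c : β → ℝ)
    (pX : α → ℝ) (hpXpos : ∀ x, 0 < pX x) (hpX1 : ∑ x, pX x = 1)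
    (cond : α → β → ℝ)
    (hcond : ∀ x y, cond x y = Real.exp ((val y * θ x - b (θ x)) / aφ + c y))
    (hcond1 : ∀ x, ∑ y, cond x y = 1)
    (p : α → β → ℝ) (hp : ∀ x y, p x y = pX x * cond x y)
    (pY : β → ℝ) (hpY : ∀ y, pY y = ∑ x, p x y)
    (Cov : ℝ)
    (hCov : Cov = (∑ x, ∑ y, p x y * (θ x * val y))
      - (∑ x, pX x * θ x) * (∑ y, pY y * val y))
    (EC : ℝ) (hEC : EC = Cov / aφ) :
    0 ≤ EC ∧ (EC = 0 ↔ ∀ x y, p x y = pX x * pY y) :=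
  glm_entropy_coefficient_nonneg_iff_indep_general val θ aφ b c pX hpXpos hpX1 cond hcond hcond1 p
    hp pY hpY Cov hCov EC hEC
end
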